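/- There exist a Banach space X, a γ-Banach space Y (0 < γ ≤ 1), and a nonzero bounded linear operator T : X → Y such that e_k(T) = 2^{1−1/γ}‖T‖ for every k ∈ ℕ. Concretely, one may take X = ℓ_p (1 ≤ p ≤ ∞), Y = ℝ × X with γ-norm ϑ(ξ, x) = ω(|ξ|, ‖x‖_X) where ω is the rotated γ-norm on ℝ², and T(x) = (0, x); then ‖T‖ = 2^{1/γ−1} and e_k(T) = 1 for all k. -/

import Mathlib

/-!
`ω(x₁, x₂) ^ γ` is the least value of `|u| ^ γ + |v| ^ γ` over the splittings `x₁ = u + v` with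
`|u - v| ≥ |x₂|`. Splittings of two points can be added, so `ω ^ γ` is subadditive, hence so is
`ϑ ^ γ` on `ℝ × X`, and `ϑ` is a γ-norm. Since `ω(0, s) = 2 ^ (1/γ - 1) |s|`, `‖T‖ = 2 ^ (1/γ - 1)`.
The image `T(B_X)` lies in the unit `ϑ`-ball around `(1, 0)`, so `e_k(T) ≤ 1`; conversely
`ϑ(ξ, x) ≥ ‖x‖`, and by Riesz's lemma no finitely many balls of radius `< 1` cover the unit ball of
the infinite-dimensional space `X = ℓ²`, so `e_k(T) ≥ 1`.
-/

open scoped BigOperators ENNReal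

noncomputable section

/-- A γ-norm on a real vector space. -/
def IsGammaNorm {Y : Type*} [AddCommGroup Y] [Module ℝ Y] (γ : ℝ) (N : Y → ℝ) : Prop :=
  (∀ y, 0 ≤ N y) ∧ (∀ y, N y = 0 ↔ y = 0) ∧
    (∀ (a : ℝ) (y : Y), N (a • y) = |a| * N y) ∧
    (∀ y z, N (y + z) ^ γ ≤ N y ^ γ + N z ^ γ)

/-- A quasi-norm with constant `C` on a real vector space. -/
def IsQuasiNorm {X : Type*} [AddCommGroup X] [Module ℝ X] (C : ℝ) (N : X → ℝ) : Prop :=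
  1 ≤ C ∧ (∀ x, 0 ≤ N x) ∧ (∀ x, N x = 0 ↔ x = 0) ∧
    (∀ (a : ℝ) (x : X), N (a • x) = |a| * N x) ∧
    (∀ x y, N (x + y) ≤ C * (N x + N y))

/-- Completeness with respect to a (quasi/γ-)norm `N`. -/
def NormComplete {Y : Type*} [AddCommGroup Y] (N : Y → ℝ) : Prop :=
  ∀ f : ℕ → Y,
    (∀ ε : ℝ, 0 < ε → ∃ n₀ : ℕ, ∀ m n, n₀ ≤ m → n₀ ≤ n → N (f m - f n) < ε) →
    ∃ y : Y, ∀ ε : ℝ, 0 < ε → ∃ n₀ : ℕ, ∀ n, n₀ ≤ n → N (f n - y) < ε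

/-- Operator norm of a linear map w.r.t. norms `NX`, `NY`. -/
def opNorm {X Y : Type*} [AddCommGroup X] [Module ℝ X] [AddCommGroup Y] [Module ℝ Y]
    (NX : X → ℝ) (NY : Y → ℝ) (T : X →ₗ[ℝ] Y) : ℝ :=
  sSup {r : ℝ | ∃ x : X, NX x ≤ 1 ∧ r = NY (T x)}

/-- The `k`-th (dyadic) outer entropy number of `T`. -/
def entropy {X Y : Type*} [AddCommGroup X] [Module ℝ X] [AddCommGroup Y] [Module ℝ Y]
    (NX : X → ℝ) (NY : Y → ℝ) (T : X →ₗ[ℝ] Y) (k : ℕ) : ℝ :=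
  sInf {ε : ℝ | 0 < ε ∧ ∃ c : Fin (2 ^ (k - 1)) → Y,
    ∀ x : X, NX x ≤ 1 → ∃ i, NY (T x - c i) ≤ ε}

/-- The `k`-th (dyadic) inner entropy number of `T`. -/
def innerEntropy {X Y : Type*} [AddCommGroup X] [Module ℝ X] [AddCommGroup Y] [Module ℝ Y]
    (NX : X → ℝ) (NY : Y → ℝ) (T : X →ₗ[ℝ] Y) (k : ℕ) : ℝ :=
  sSup {ε : ℝ | 0 < ε ∧ ∃ p : Fin (2 ^ (k - 1) + 1) → X,
    (∀ i, NX (p i) ≤ 1) ∧ ∀ i j, i ≠ j → 2 * ε ≤ NY (T (p i) - T (p j))}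

open Real Filter Topology
open scoped lp

section RotatedNorm

variable {γ : ℝ}

lemma abs_add_rpow_le (hγ : 0 ≤ γ) (hγ1 : γ ≤ 1) (x y : ℝ) :
    |x + y| ^ γ ≤ |x| ^ γ + |y| ^ γ :=
  (rpow_le_rpow (abs_nonneg _) (abs_add_le x y) hγ).trans
    (rpow_add_le_add_rpow (abs_nonneg x) (abs_nonneg y) hγ hγ1)

/-- `rotatedNormPow γ x₁ x₂ = ω(x₁, x₂) ^ γ` for the rotated γ-norm `ω` on `ℝ²`. -/
def rotatedNormPow (γ x₁ x₂ : ℝ) : ℝ :=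
  if |x₂| < |x₁| then |x₁| ^ γ else |(x₁ + x₂) / 2| ^ γ + |(x₁ - x₂) / 2| ^ γ

lemma rotatedNormPow_nonneg (γ x₁ x₂ : ℝ) : 0 ≤ rotatedNormPow γ x₁ x₂ := by
  unfold rotatedNormPow
  split_ifs <;> positivity

lemma rotatedNormPow_zero_left (γ x₂ : ℝ) : rotatedNormPow γ 0 x₂ = 2 * |x₂ / 2| ^ γ := by
  simp [rotatedNormPow, neg_div, two_mul]

lemma rotatedNormPow_mul (hγ : γ ≠ 0) (r x₁ x₂ : ℝ) :
    rotatedNormPow γ (r * x₁) (r * x₂) = |r| ^ γ * rotatedNormPow γ x₁ x₂ := by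
  rcases eq_or_ne r 0 with rfl | hr
  · simp [rotatedNormPow_zero_left, zero_rpow hγ]
  have hr' : 0 < |r| := abs_pos.2 hr
  simp only [rotatedNormPow, ← mul_add, ← mul_sub, mul_div_assoc, abs_mul,
    mul_lt_mul_iff_right₀ hr', mul_rpow hr'.le (abs_nonneg _)]
  split_ifs <;> ring

lemma abs_add_div_two_rpow_add {a t : ℝ} (ht : |a| ≤ |t|) :
    |(a + t) / 2| ^ γ + |(a - t) / 2| ^ γ = ((|t| + a) / 2) ^ γ + ((|t| - a) / 2) ^ γ := by
  obtain ⟨h₁, h₂⟩ := abs_le.mp ht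
  rcases abs_cases t with ⟨h, -⟩ | ⟨h, -⟩ <;> rw [h] at h₁ h₂ ⊢
  · rw [abs_of_nonneg (by linarith), abs_of_nonpos (by linarith)]
    ring_nf
  · rw [abs_of_nonpos (by linarith), abs_of_nonneg (by linarith), add_comm]
    ring_nf

lemma abs_add_div_two_rpow_add_mono (hγ : 0 ≤ γ) {a t t' : ℝ} (ht : |a| ≤ |t|)
    (htt' : |t| ≤ |t'|) :
    |(a + t) / 2| ^ γ + |(a - t) / 2| ^ γ ≤ |(a + t') / 2| ^ γ + |(a - t') / 2| ^ γ := by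
  rw [abs_add_div_two_rpow_add ht, abs_add_div_two_rpow_add (ht.trans htt')]
  obtain ⟨h₁, h₂⟩ := abs_le.mp ht
  gcongr
  linarith

lemma exists_rotatedNormPow_eq (hγ : γ ≠ 0) (x₁ x₂ : ℝ) :
    ∃ u v, u + v = x₁ ∧ |x₂| ≤ |u - v| ∧ rotatedNormPow γ x₁ x₂ = |u| ^ γ + |v| ^ γ := by
  unfold rotatedNormPow
  split_ifs with h
  · exact ⟨x₁, 0, add_zero _, by simpa using h.le, by simp [zero_rpow hγ]⟩
  · exact ⟨(x₁ + x₂) / 2, (x₁ - x₂) / 2, by ring,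
      by rw [show (x₁ + x₂) / 2 - (x₁ - x₂) / 2 = x₂ by ring], rfl⟩

lemma rotatedNormPow_le (hγ : 0 ≤ γ) (hγ1 : γ ≤ 1) {x₁ x₂ u v : ℝ} (huv : u + v = x₁)
    (h : |x₂| ≤ |u - v|) : rotatedNormPow γ x₁ x₂ ≤ |u| ^ γ + |v| ^ γ := by
  unfold rotatedNormPow
  split_ifs with hx
  · rw [← huv]
    exact abs_add_rpow_le hγ hγ1 u v
  · calc _ ≤ |(x₁ + (u - v)) / 2| ^ γ + |(x₁ - (u - v)) / 2| ^ γ :=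
          abs_add_div_two_rpow_add_mono hγ (not_lt.mp hx) h
      _ = |u| ^ γ + |v| ^ γ := by
          rw [← huv]
          ring_nf

lemma rotatedNormPow_mono (hγ : 0 < γ) (hγ1 : γ ≤ 1) (x₁ : ℝ) {x₂ y₂ : ℝ} (h : |x₂| ≤ |y₂|) :
    rotatedNormPow γ x₁ x₂ ≤ rotatedNormPow γ x₁ y₂ := by
  obtain ⟨u, v, huv, hy, heq⟩ := exists_rotatedNormPow_eq hγ.ne' x₁ y₂
  exact heq ▸ rotatedNormPow_le hγ.le hγ1 huv (h.trans hy)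

lemma rotatedNormPow_congr_abs (hγ : 0 < γ) (hγ1 : γ ≤ 1) (x₁ : ℝ) {x₂ y₂ : ℝ}
    (h : |x₂| = |y₂|) : rotatedNormPow γ x₁ x₂ = rotatedNormPow γ x₁ y₂ :=
  (rotatedNormPow_mono hγ hγ1 x₁ h.le).antisymm (rotatedNormPow_mono hγ hγ1 x₁ h.ge)

lemma rotatedNormPow_add_le (hγ : 0 < γ) (hγ1 : γ ≤ 1) (x₁ x₂ y₁ y₂ : ℝ) :
    rotatedNormPow γ (x₁ + y₁) (x₂ + y₂) ≤ rotatedNormPow γ x₁ x₂ + rotatedNormPow γ y₁ y₂ := by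
  obtain ⟨u, v, huv, hx, hxeq⟩ := exists_rotatedNormPow_eq hγ.ne' x₁ x₂
  -- swapping `u'` and `v'` is free, so the differences `u - v` and `u' - v'` can be aligned
  obtain ⟨u', v', huv', hy, hyeq, hsign⟩ : ∃ u' v', u' + v' = y₁ ∧ |y₂| ≤ |u' - v'| ∧
      rotatedNormPow γ y₁ y₂ = |u'| ^ γ + |v'| ^ γ ∧ 0 ≤ (u - v) * (u' - v') := by
    obtain ⟨u', v', huv', hy, hyeq⟩ := exists_rotatedNormPow_eq hγ.ne' y₁ y₂
    rcases le_total 0 ((u - v) * (u' - v')) with h | h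
    · exact ⟨u', v', huv', hy, hyeq, h⟩
    · exact ⟨v', u', by linarith, by rwa [abs_sub_comm], by rw [hyeq, add_comm], by nlinarith⟩
  have hdiff : |x₂ + y₂| ≤ |(u + u') - (v + v')| := calc
    |x₂ + y₂| ≤ |x₂| + |y₂| := abs_add_le _ _
    _ ≤ |u - v| + |u' - v'| := add_le_add hx hy
    _ = |(u + u') - (v + v')| := by
      rw [show (u + u') - (v + v') = (u - v) + (u' - v') by ring,
        (abs_add_eq_add_abs_iff _ _).2 (mul_nonneg_iff.1 hsign)]
  calc rotatedNormPow γ (x₁ + y₁) (x₂ + y₂) ≤ |u + u'| ^ γ + |v + v'| ^ γ :=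
        rotatedNormPow_le hγ.le hγ1 (by rw [← huv, ← huv']; ring) hdiff
    _ ≤ (|u| ^ γ + |u'| ^ γ) + (|v| ^ γ + |v'| ^ γ) :=
        add_le_add (abs_add_rpow_le hγ.le hγ1 u u') (abs_add_rpow_le hγ.le hγ1 v v')
    _ = rotatedNormPow γ x₁ x₂ + rotatedNormPow γ y₁ y₂ := by
        rw [hxeq, hyeq]
        ring

lemma max_abs_rpow_le_rotatedNormPow (hγ : 0 < γ) (hγ1 : γ ≤ 1) (x₁ x₂ : ℝ) :
    max |x₁| |x₂| ^ γ ≤ rotatedNormPow γ x₁ x₂ := by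
  obtain ⟨u, v, rfl, h, heq⟩ := exists_rotatedNormPow_eq hγ.ne' x₁ x₂
  rw [heq]
  rcases max_choice |u + v| |x₂| with hm | hm <;> rw [hm]
  · exact abs_add_rpow_le hγ.le hγ1 u v
  · calc |x₂| ^ γ ≤ |u + -v| ^ γ := by
          rw [← sub_eq_add_neg]
          exact rpow_le_rpow (abs_nonneg _) h hγ.le
      _ ≤ |u| ^ γ + |v| ^ γ := by simpa using abs_add_rpow_le hγ.le hγ1 u (-v)

lemma rotatedNormPow_le_two_mul_rpow (hγ : 0 ≤ γ) (hγ1 : γ ≤ 1) {x₁ x₂ t : ℝ}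
    (h₁ : |x₁| ≤ t) (h₂ : |x₂| ≤ t) : rotatedNormPow γ x₁ x₂ ≤ 2 * t ^ γ := by
  obtain ⟨h₁l, h₁r⟩ := abs_le.mp h₁
  have ht : 0 ≤ t := (abs_nonneg _).trans h₁
  calc rotatedNormPow γ x₁ x₂ ≤ |(x₁ + t) / 2| ^ γ + |(x₁ - t) / 2| ^ γ :=
        rotatedNormPow_le hγ hγ1 (by ring)
          (by rwa [show (x₁ + t) / 2 - (x₁ - t) / 2 = t by ring, abs_of_nonneg ht])
    _ ≤ t ^ γ + t ^ γ := by gcongr <;> rw [abs_le] <;> constructor <;> linarith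
    _ = 2 * t ^ γ := by ring

end RotatedNorm

section ThetaNorm

variable {γ : ℝ} {X : Type*} [NormedAddCommGroup X]

def thetaNorm (γ : ℝ) (p : ℝ × X) : ℝ := rotatedNormPow γ p.1 ‖p.2‖ ^ γ⁻¹

lemma thetaNorm_rpow (hγ : γ ≠ 0) (p : ℝ × X) :
    thetaNorm γ p ^ γ = rotatedNormPow γ p.1 ‖p.2‖ :=
  rpow_inv_rpow (rotatedNormPow_nonneg _ _ _) hγ

lemma norm_le_thetaNorm (hγ : 0 < γ) (hγ1 : γ ≤ 1) (p : ℝ × X) : ‖p‖ ≤ thetaNorm γ p := by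
  rw [thetaNorm, le_rpow_inv_iff_of_pos (norm_nonneg _) (rotatedNormPow_nonneg _ _ _) hγ,
    Prod.norm_def]
  simpa using max_abs_rpow_le_rotatedNormPow hγ hγ1 p.1 ‖p.2‖

lemma thetaNorm_le (hγ : 0 < γ) (hγ1 : γ ≤ 1) (p : ℝ × X) :
    thetaNorm γ p ≤ 2 ^ γ⁻¹ * ‖p‖ := by
  rw [thetaNorm, rpow_inv_le_iff_of_pos (rotatedNormPow_nonneg _ _ _) (by positivity) hγ,
    mul_rpow (by positivity) (norm_nonneg _), rpow_inv_rpow zero_le_two hγ.ne']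
  exact rotatedNormPow_le_two_mul_rpow hγ.le hγ1 (by simpa using norm_fst_le p)
    (by simpa using norm_snd_le p)

lemma thetaNorm_smul [NormedSpace ℝ X] (hγ : 0 < γ) (hγ1 : γ ≤ 1) (a : ℝ) (p : ℝ × X) :
    thetaNorm γ (a • p) = |a| * thetaNorm γ p := by
  have hnorm : |‖(a • p).2‖| = |a * ‖p.2‖| := by simp [norm_smul, abs_mul]
  rw [thetaNorm, thetaNorm, rotatedNormPow_congr_abs hγ hγ1 _ hnorm, Prod.smul_fst, smul_eq_mul,
    rotatedNormPow_mul hγ.ne', mul_rpow (by positivity) (rotatedNormPow_nonneg _ _ _),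
    rpow_rpow_inv (abs_nonneg a) hγ.ne']

lemma thetaNorm_add_rpow_le (hγ : 0 < γ) (hγ1 : γ ≤ 1) (p q : ℝ × X) :
    thetaNorm γ (p + q) ^ γ ≤ thetaNorm γ p ^ γ + thetaNorm γ q ^ γ := by
  rw [thetaNorm_rpow hγ.ne', thetaNorm_rpow hγ.ne', thetaNorm_rpow hγ.ne']
  calc rotatedNormPow γ (p + q).1 ‖(p + q).2‖
      ≤ rotatedNormPow γ (p.1 + q.1) (‖p.2‖ + ‖q.2‖) := by
        refine rotatedNormPow_mono hγ hγ1 _ ?_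
        rw [abs_norm, abs_of_nonneg (by positivity)]
        exact norm_add_le p.2 q.2
    _ ≤ rotatedNormPow γ p.1 ‖p.2‖ + rotatedNormPow γ q.1 ‖q.2‖ :=
        rotatedNormPow_add_le hγ hγ1 _ _ _ _

lemma isGammaNorm_thetaNorm [NormedSpace ℝ X] (hγ : 0 < γ) (hγ1 : γ ≤ 1) :
    IsGammaNorm γ (thetaNorm (X := X) γ) := by
  refine ⟨fun p => rpow_nonneg (rotatedNormPow_nonneg _ _ _) _, fun p => ⟨fun h => ?_, ?_⟩,
    thetaNorm_smul hγ hγ1, thetaNorm_add_rpow_le hγ hγ1⟩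
  · exact norm_eq_zero.1 ((h ▸ norm_le_thetaNorm hγ hγ1 p).antisymm (norm_nonneg _))
  · rintro rfl
    simp [thetaNorm, rotatedNormPow_zero_left, zero_rpow hγ.ne', zero_rpow (inv_ne_zero hγ.ne')]

lemma thetaNorm_inr [NormedSpace ℝ X] (hγ : 0 < γ) (x : X) :
    thetaNorm γ (LinearMap.inr ℝ ℝ X x) = 2 ^ (γ⁻¹ - 1) * ‖x‖ := by
  rw [thetaNorm, LinearMap.inr_apply, rotatedNormPow_zero_left,
    mul_rpow zero_le_two (by positivity), rpow_rpow_inv (abs_nonneg _) hγ.ne',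
    rpow_sub two_pos, rpow_one, abs_of_nonneg (by positivity)]
  ring

lemma thetaNorm_neg_one_le_one (hγ : 0 < γ) (hγ1 : γ ≤ 1) {x : X} (hx : ‖x‖ ≤ 1) :
    thetaNorm γ (-1, x) ≤ 1 := by
  refine rpow_le_one (rotatedNormPow_nonneg _ _ _) ?_ (inv_nonneg.2 hγ.le)
  simpa [zero_rpow hγ.ne'] using
    rotatedNormPow_le (x₂ := ‖x‖) hγ.le hγ1 (add_zero (-1 : ℝ)) (by simpa using hx)

end ThetaNorm

lemma normComplete_of_norm_le {E : Type*} [NormedAddCommGroup E] [CompleteSpace E]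
    {N : E → ℝ} {C : ℝ} (hlow : ∀ y, ‖y‖ ≤ N y) (hup : ∀ y, N y ≤ C * ‖y‖) :
    NormComplete N := by
  intro f hf
  have hcauchy : CauchySeq f := Metric.cauchySeq_iff.2 fun ε hε => by
    obtain ⟨n₀, hn₀⟩ := hf ε hε
    exact ⟨n₀, fun m hm n hn => (dist_eq_norm _ _).trans_lt ((hlow _).trans_lt (hn₀ m n hm hn))⟩
  obtain ⟨y, hy⟩ := cauchySeq_tendsto_of_complete hcauchy
  have hN : Tendsto (fun n => N (f n - y)) atTop (𝓝 0) :=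
    squeeze_zero (fun n => (norm_nonneg _).trans (hlow _)) (fun n => hup _)
      (by simpa using (tendsto_iff_norm_sub_tendsto_zero.1 hy).const_mul C)
  exact ⟨y, fun ε hε => eventually_atTop.1 (hN.eventually_lt_const hε)⟩

lemma opNorm_eq_of_forall_eq_mul_norm {X Y : Type*} [NormedAddCommGroup X] [NormedSpace ℝ X]
    [Nontrivial X] [AddCommGroup Y] [Module ℝ Y] {N : Y → ℝ} {T : X →ₗ[ℝ] Y} {C : ℝ}
    (hC : 0 ≤ C) (hT : ∀ x, N (T x) = C * ‖x‖) : opNorm (fun x : X => ‖x‖) N T = C := by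
  obtain ⟨x₀, hx₀⟩ := exists_norm_eq X zero_le_one
  refine IsGreatest.csSup_eq ⟨⟨x₀, hx₀.le, by rw [hT, hx₀, mul_one]⟩, ?_⟩
  rintro _ ⟨x, hx, rfl⟩
  rw [hT]
  exact mul_le_of_le_one_right hC hx

lemma exists_norm_le_one_lt_norm_sub {E : Type*} [NormedAddCommGroup E] [NormedSpace ℝ E]
    (hE : ¬FiniteDimensional ℝ E) {s : Set E} (hs : s.Finite) {r : ℝ} (hr : r < 1) :
    ∃ x : E, ‖x‖ ≤ 1 ∧ ∀ y ∈ s, r < ‖y - x‖ := by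
  obtain ⟨r', hrr', hr'⟩ := exists_between hr
  have : FiniteDimensional ℝ (Submodule.span ℝ s) := FiniteDimensional.span_of_finite ℝ hs
  have hproper : ∃ x, x ∉ Submodule.span ℝ s := by
    by_contra! h
    exact hE (Module.finite_def.2 (Submodule.eq_top_iff'.2 h ▸ Submodule.fg_span hs))
  obtain ⟨x₀, hx₀, hdist⟩ := riesz_lemma (Submodule.closed_of_finiteDimensional _) hproper hr'
  have hx₀' : 0 < ‖x₀‖ := norm_pos_iff.2 fun h => hx₀ (h ▸ Submodule.zero_mem _)
  refine ⟨‖x₀‖⁻¹ • x₀, by rw [norm_smul, norm_inv, norm_norm, inv_mul_cancel₀ hx₀'.ne'],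
    fun y hy => hrr'.trans_le (le_of_mul_le_mul_left ?_ hx₀')⟩
  have hscale := norm_smul ‖x₀‖ (y - ‖x₀‖⁻¹ • x₀)
  rw [norm_norm, smul_sub, smul_inv_smul₀ hx₀'.ne', norm_sub_rev] at hscale
  rw [← hscale, mul_comm]
  exact hdist _ (Submodule.smul_mem _ _ (Submodule.subset_span hy))

lemma entropy_inr_eq_one {γ : ℝ} (hγ : 0 < γ) (hγ1 : γ ≤ 1) {X : Type*} [NormedAddCommGroup X]
    [NormedSpace ℝ X] (hX : ¬FiniteDimensional ℝ X) (k : ℕ) :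
    entropy (fun x : X => ‖x‖) (thetaNorm γ) (LinearMap.inr ℝ ℝ X) k = 1 := by
  refine IsLeast.csInf_eq ⟨⟨one_pos, fun _ => (1, 0), fun x hx => ⟨⟨0, by positivity⟩, ?_⟩⟩, ?_⟩
  · simpa using thetaNorm_neg_one_le_one hγ hγ1 hx
  · rintro ε ⟨-, c, hc⟩
    by_contra! hε
    obtain ⟨x, hx, hfar⟩ :=
      exists_norm_le_one_lt_norm_sub hX (Set.finite_range fun i => (c i).2) hε
    obtain ⟨i, hi⟩ := hc x hx
    refine (hfar _ ⟨i, rfl⟩).not_ge ?_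
    calc ‖(c i).2 - x‖ = ‖(LinearMap.inr ℝ ℝ X x - c i).2‖ := by simp [norm_sub_rev]
      _ ≤ ‖LinearMap.inr ℝ ℝ X x - c i‖ := norm_snd_le _
      _ ≤ thetaNorm γ (LinearMap.inr ℝ ℝ X x - c i) := norm_le_thetaNorm hγ hγ1 _
      _ ≤ ε := hi

lemma not_finiteDimensional_l2 : ¬FiniteDimensional ℝ ℓ²(ℕ, ℝ) := fun _ =>
  Module.Finite.not_linearIndependent_of_infinite _
    (default : HilbertBasis ℕ ℝ ℓ²(ℕ, ℝ)).orthonormal.linearIndependent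

theorem exists_operator_entropy_sharp (γ : ℝ) (hγ : 0 < γ) (hγ1 : γ ≤ 1) :
    ∃ (X : Type) (_ : NormedAddCommGroup X) (_ : NormedSpace ℝ X) (_ : CompleteSpace X)
      (Y : Type) (_ : AddCommGroup Y) (_ : Module ℝ Y) (N : Y → ℝ) (T : X →ₗ[ℝ] Y),
      IsGammaNorm γ N ∧ NormComplete N ∧ T ≠ 0 ∧
        (∃ M : ℝ, ∀ x, N (T x) ≤ M * ‖x‖) ∧
        ∀ k : ℕ, 1 ≤ k →
          entropy (fun x : X => ‖x‖) N T k =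
            (2 : ℝ) ^ (1 - 1/γ) * opNorm (fun x : X => ‖x‖) N T := by
  have : Nontrivial ℓ²(ℕ, ℝ) :=
    not_subsingleton_iff_nontrivial.1 fun _ => not_finiteDimensional_l2 inferInstance
  have hT := thetaNorm_inr (X := ℓ²(ℕ, ℝ)) hγ
  refine ⟨ℓ²(ℕ, ℝ), inferInstance, inferInstance, inferInstance, ℝ × ℓ²(ℕ, ℝ), inferInstance,
    inferInstance, thetaNorm γ, LinearMap.inr ℝ ℝ _, isGammaNorm_thetaNorm hγ hγ1,
    normComplete_of_norm_le (norm_le_thetaNorm hγ hγ1) (thetaNorm_le hγ hγ1), ?_,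
    ⟨_, fun x => (hT x).le⟩, fun k _ => ?_⟩
  · obtain ⟨x, hx⟩ := exists_ne (0 : ℓ²(ℕ, ℝ))
    exact fun h => hx (LinearMap.inr_injective (R := ℝ) (M := ℝ) (by simp [h]))
  · rw [entropy_inr_eq_one hγ hγ1 not_finiteDimensional_l2,
      opNorm_eq_of_forall_eq_mul_norm (by positivity) hT, ← rpow_add two_pos, one_div]
    norm_num
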